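/- The planar code state is unique: if f : (E(𝓛) → ZMod 2) → ℂ satisfies (a) (-1)^{n_s(x)} f(x) = f(x) for every vertex s and every x, where n_s(x) = #{e ∈ δs : x_e = 1}, and (b) f(x + 1_{∂p}) = f(x) for every plaquette p and every x, then f is a scalar multiple of the indicator function of the cycle space 𝒵. -/

import Mathlib

open Finset

/-- Edges of the L×L square lattice: `horiz i j` is the edge from (i,j) to (i+1,j),
`vert i j` is the edge from (i,j) to (i,j+1). -/
inductive Edge (L : ℕ) where
  | horiz : Fin L → Fin (L+1) → Edge L
  | vert  : Fin (L+1) → Fin L → Edge L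
deriving DecidableEq, Fintype

/-- Vertices of the L×L square lattice. -/
abbrev Vertex (L : ℕ) := Fin (L+1) × Fin (L+1)

/-- The two endpoints of an edge. -/
def Edge.ends {L : ℕ} : Edge L → Vertex L × Vertex L
  | .horiz i j => ((i.castSucc, j), (i.succ, j))
  | .vert i j  => ((i, j.castSucc), (i, j.succ))

/-- A vertex is incident to an edge iff it is one of its endpoints. -/
def Incident {L : ℕ} (s : Vertex L) (e : Edge L) : Prop :=
  s = e.ends.1 ∨ s = e.ends.2

instance {L : ℕ} (s : Vertex L) (e : Edge L) : Decidable (Incident s e) := by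
  unfold Incident; infer_instance

/-- The star δs: the set of edges incident to a vertex s. -/
def star {L : ℕ} (s : Vertex L) : Finset (Edge L) :=
  Finset.univ.filter (fun e => Incident s e)

/-- The boundary ∂p of the plaquette p = (i,j): the four edges of the unit square
with corners (i,j), (i+1,j), (i,j+1), (i+1,j+1). -/
def pBoundary {L : ℕ} (p : Fin L × Fin L) : Finset (Edge L) :=
  {Edge.horiz p.1 p.2.castSucc, Edge.horiz p.1 p.2.succ,
   Edge.vert p.1.castSucc p.2, Edge.vert p.1.succ p.2}


/-- A 1-chain x : E(𝓛) → ZMod 2 is a 1-cycle iff ∑_{e ∈ δs} x_e = 0 for every vertex s. -/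
def IsCycle {L : ℕ} (x : Edge L → ZMod 2) : Prop :=
  ∀ s : Vertex L, ∑ e ∈ star s, x e = 0

instance {L : ℕ} (x : Edge L → ZMod 2) : Decidable (IsCycle x) := by
  unfold IsCycle; infer_instance

/-- The indicator 1-chain of the boundary ∂p of a plaquette p. -/
def pChain {L : ℕ} (p : Fin L × Fin L) : Edge L → ZMod 2 :=
  fun e => if e ∈ pBoundary p then 1 else 0

-- ================== auxiliary ==================

def edgeEquiv (L : ℕ) : Edge L ≃ (Fin L × Fin (L+1)) ⊕ (Fin (L+1) × Fin L) where
  toFun e := match e with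
    | .horiz i j => .inl (i, j)
    | .vert i j => .inr (i, j)
  invFun z := match z with
    | .inl (i, j) => .horiz i j
    | .inr (i, j) => .vert i j
  left_inv e := by cases e <;> rfl
  right_inv z := by rcases z with ⟨i, j⟩ | ⟨i, j⟩ <;> rfl

lemma ite_or_split {P Q : Prop} [Decidable P] [Decidable Q] (h : ¬(P ∧ Q)) (v : ZMod 2) :
    (if P ∨ Q then v else 0) = (if P then v else 0) + (if Q then v else 0) := by
  by_cases hP : P <;> by_cases hQ : Q <;> simp [hP, hQ]
  exact absurd ⟨hP, hQ⟩ h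

lemma sum_castSucc_eq {L : ℕ} {M : Type*} [AddCommMonoid M] (a : Fin (L+1)) (g : Fin L → M) :
    ∑ i : Fin L, (if a = i.castSucc then g i else 0) =
      if h : (a : ℕ) < L then g ⟨a, h⟩ else 0 := by
  by_cases h : (a : ℕ) < L
  · rw [dif_pos h]
    rw [Finset.sum_eq_single ⟨(a : ℕ), h⟩]
    · rw [if_pos]; exact Fin.ext rfl
    · intro b _ hb
      rw [if_neg]; intro hc; apply hb; apply Fin.ext
      have := congrArg Fin.val hc; simpa using this.symm
    · simp
  · rw [dif_neg h]
    apply Finset.sum_eq_zero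
    intro b _
    rw [if_neg]; intro hc
    have := congrArg Fin.val hc; simp at this; omega
lemma sum_succ_eq {L : ℕ} {M : Type*} [AddCommMonoid M] (a : Fin (L+1)) (g : Fin L → M) :
    ∑ i : Fin L, (if a = i.succ then g i else 0) =
      if h : 0 < (a : ℕ) then g ⟨(a : ℕ) - 1, by have := a.isLt; omega⟩ else 0 := by
  by_cases h : 0 < (a : ℕ)
  · rw [dif_pos h]
    rw [Finset.sum_eq_single ⟨(a : ℕ) - 1, by have := a.isLt; omega⟩]
    · rw [if_pos]; apply Fin.ext; simp [Fin.val_succ]; omega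
    · intro b _ hb
      rw [if_neg]; intro hc; apply hb; apply Fin.ext
      have := congrArg Fin.val hc; simp [Fin.val_succ] at this; simp; omega
    · simp
  · rw [dif_neg h]
    apply Finset.sum_eq_zero
    intro b _
    rw [if_neg]; intro hc
    have := congrArg Fin.val hc; simp [Fin.val_succ] at this; omega

def Hcol {L : ℕ} (x : Edge L → ZMod 2) (i j : Fin (L+1)) : ZMod 2 :=
  (if h : (i : ℕ) < L then x (.horiz ⟨i, h⟩ j) else 0) +
  (if h : 0 < (i : ℕ) then x (.horiz ⟨(i : ℕ) - 1, by have := i.isLt; omega⟩ j) else 0)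

lemma lat_star_sum {L : ℕ} (x : Edge L → ZMod 2) (a b : Fin (L+1)) :
    ∑ e ∈ star (a, b), x e =
      Hcol x a b +
      ((if h : (b : ℕ) < L then x (.vert a ⟨b, h⟩) else 0) +
       (if h : 0 < (b : ℕ) then x (.vert a ⟨(b : ℕ) - 1, by have := b.isLt; omega⟩) else 0)) := by
  rw [show _root_.star (a, b) = Finset.univ.filter (fun e => Incident (a, b) e) from rfl, Finset.sum_filter]
  rw [← Equiv.sum_comp (edgeEquiv L).symm (fun e => if Incident (a, b) e then x e else 0)]
  rw [Fintype.sum_sum_type]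
  simp only [edgeEquiv, Equiv.coe_fn_symm_mk]
  rw [Fintype.sum_prod_type, Fintype.sum_prod_type]
  simp only [Incident, Edge.ends, Prod.mk.injEq]
  have hcs : ∀ i : Fin L, i.castSucc ≠ i.succ := by
    intro i h; have := congrArg Fin.val h; simp [Fin.val_succ] at this
  have hh : ∀ i : Fin L, ∀ j : Fin (L+1),
      (if (a = i.castSucc ∧ b = j) ∨ (a = i.succ ∧ b = j) then x (.horiz i j) else 0)
        = (if b = j then ((if a = i.castSucc then x (.horiz i j) else 0)
            + (if a = i.succ then x (.horiz i j) else 0)) else 0) := by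
    intro i j
    by_cases h1 : a = i.castSucc <;> by_cases h2 : a = i.succ <;> by_cases h3 : b = j <;>
      first
        | (exfalso; exact hcs i (h1 ▸ h2))
        | simp [h1, h2, h3, hcs i, (hcs i).symm]
  have hv : ∀ i : Fin (L+1), ∀ j : Fin L,
      (if (a = i ∧ b = j.castSucc) ∨ (a = i ∧ b = j.succ) then x (.vert i j) else 0)
        = (if a = i then ((if b = j.castSucc then x (.vert i j) else 0)
            + (if b = j.succ then x (.vert i j) else 0)) else 0) := by
    intro i j
    by_cases h1 : a = i <;> by_cases h2 : b = j.castSucc <;> by_cases h3 : b = j.succ <;>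
      first
        | (exfalso; exact hcs j (h2 ▸ h3))
        | simp [h1, h2, h3, hcs j, (hcs j).symm]
  simp only [hh, hv]
  simp only [Finset.sum_ite_eq, Finset.mem_univ, if_true]
  have hpull : ∀ i : Fin (L+1),
      (∑ j : Fin L, if a = i then ((if b = j.castSucc then x (Edge.vert i j) else 0)
          + if b = j.succ then x (Edge.vert i j) else 0) else 0)
      = if a = i then (∑ j : Fin L, ((if b = j.castSucc then x (Edge.vert i j) else 0)
          + if b = j.succ then x (Edge.vert i j) else 0)) else 0 := by
    intro i; split <;> simp
  simp only [hpull, Finset.sum_ite_eq, Finset.mem_univ, if_true]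
  rw [Finset.sum_add_distrib, sum_castSucc_eq, sum_succ_eq, Finset.sum_add_distrib,
    sum_castSucc_eq, sum_succ_eq]
  rfl

def colF {L : ℕ} (x : Edge L → ZMod 2) (i : Fin (L+1)) (k : ℕ) : ZMod 2 :=
  if h : k < L + 1 then Hcol x i ⟨k, h⟩ else 0

def rowF {L : ℕ} (x : Edge L → ZMod 2) (i : Fin L) (k : ℕ) : ZMod 2 :=
  if h : k < L + 1 then x (.horiz i ⟨k, h⟩) else 0

lemma vert_eq {L : ℕ} {x : Edge L → ZMod 2} (hc : IsCycle x) (i : Fin (L+1)) :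
    ∀ k : ℕ, ∀ hk : k < L, x (.vert i ⟨k, hk⟩) = ∑ j ∈ Finset.range (k+1), colF x i j := by
  intro k
  induction k with
  | zero =>
    intro hk
    have h0 := hc (i, ⟨0, by omega⟩)
    rw [lat_star_sum] at h0
    rw [dif_pos (show ((⟨0, by omega⟩ : Fin (L+1)) : ℕ) < L from hk)] at h0
    rw [dif_neg (by simp)] at h0
    rw [Finset.sum_range_one]
    rw [show colF x i 0 = Hcol x i ⟨0, by omega⟩ from dif_pos _]
    have hz : ∀ a b : ZMod 2, a + (b + 0) = 0 → b = a := by decide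
    exact hz _ _ h0
  | succ k ih =>
    intro hk
    have h0 := hc (i, ⟨k + 1, by omega⟩)
    rw [lat_star_sum] at h0
    rw [dif_pos (show ((⟨k+1, by omega⟩ : Fin (L+1)) : ℕ) < L from hk)] at h0
    rw [dif_pos (show 0 < ((⟨k+1, by omega⟩ : Fin (L+1)) : ℕ) from Nat.succ_pos k)] at h0
    rw [Finset.sum_range_succ, ← ih (by omega)]
    rw [show colF x i (k+1) = Hcol x i ⟨k+1, by omega⟩ from dif_pos _]
    have hz : ∀ a b c : ZMod 2, a + (b + c) = 0 → b = c + a := by decide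
    exact hz _ _ _ h0

lemma col_sum {L : ℕ} {x : Edge L → ZMod 2} (hL : 1 ≤ L) (hc : IsCycle x) (i : Fin (L+1)) :
    ∑ j ∈ Finset.range (L+1), colF x i j = 0 := by
  have h0 := hc (i, ⟨L, by omega⟩)
  rw [lat_star_sum] at h0
  rw [dif_neg (by simp)] at h0
  rw [dif_pos (show 0 < ((⟨L, by omega⟩ : Fin (L+1)) : ℕ) from hL)] at h0
  have hv := vert_eq hc i (L-1) (by omega)
  have hL1 : L - 1 + 1 = L := by omega
  rw [hL1] at hv
  rw [Finset.sum_range_succ, ← hv]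
  rw [show colF x i L = Hcol x i ⟨L, by omega⟩ from dif_pos _]
  have hz : ∀ a b : ZMod 2, a + (0 + b) = 0 → b + a = 0 := by decide
  exact hz _ _ h0

lemma row_sum {L : ℕ} {x : Edge L → ZMod 2} (hL : 1 ≤ L) (hc : IsCycle x) :
    ∀ k : ℕ, ∀ hk : k < L, ∑ j ∈ Finset.range (L+1), rowF x ⟨k, hk⟩ j = 0 := by
  intro k
  induction k with
  | zero =>
    intro hk
    have h0 := col_sum hL hc ⟨0, by omega⟩
    have he : ∀ j ∈ Finset.range (L+1), colF x (⟨0, by omega⟩ : Fin (L+1)) j = rowF x ⟨0, hk⟩ j := by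
      intro j hj
      rw [Finset.mem_range] at hj
      simp only [colF, rowF, Hcol, dif_pos hj]
      rw [dif_pos (show ((⟨0, by omega⟩ : Fin (L+1)) : ℕ) < L from hk), dif_neg (by simp)]
      rw [add_zero]
    rw [Finset.sum_congr rfl he] at h0
    exact h0
  | succ k ih =>
    intro hk
    have h0 := col_sum hL hc ⟨k+1, by omega⟩
    have he : ∀ j ∈ Finset.range (L+1), colF x (⟨k+1, by omega⟩ : Fin (L+1)) j
        = rowF x ⟨k+1, hk⟩ j + rowF x ⟨k, by omega⟩ j := by
      intro j hj
      rw [Finset.mem_range] at hj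
      simp only [colF, rowF, Hcol, dif_pos hj]
      rw [dif_pos (show ((⟨k+1, by omega⟩ : Fin (L+1)) : ℕ) < L from hk),
        dif_pos (show 0 < ((⟨k+1, by omega⟩ : Fin (L+1)) : ℕ) from Nat.succ_pos k)]
      rfl
    rw [Finset.sum_congr rfl he, Finset.sum_add_distrib, ih (by omega)] at h0
    have hz : ∀ a : ZMod 2, a + 0 = 0 → a = 0 := by decide
    exact hz _ h0

def coef {L : ℕ} (x : Edge L → ZMod 2) (p : Fin L × Fin L) : ZMod 2 :=
  ∑ j ∈ Finset.range ((p.2 : ℕ) + 1), rowF x p.1 j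

lemma coef_val {L : ℕ} (x : Edge L → ZMod 2) (a : Fin L) (q : Fin L) :
    coef x (a, q) = ∑ j ∈ Finset.range ((q : ℕ) + 1), rowF x a j := rfl

lemma decomp {L : ℕ} (hL : 1 ≤ L) {x : Edge L → ZMod 2} (hc : IsCycle x) :
    ∑ p ∈ Finset.univ.filter (fun p => coef x p = 1), pChain p = x := by
  funext e
  rw [Finset.sum_apply, Finset.sum_filter]
  have hcoef : ∀ p : Fin L × Fin L, (if coef x p = 1 then pChain p e else 0) = coef x p * pChain p e := by
    intro p
    rcases (show coef x p = 0 ∨ coef x p = 1 from by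
      generalize coef x p = z; revert z; decide) with h | h <;> simp [h]
  rw [Finset.sum_congr rfl (fun p _ => hcoef p)]
  cases e with
  | horiz i j =>
    have key : ∀ p : Fin L × Fin L, coef x p * pChain p (.horiz i j)
        = if i = p.1 then ((if j = p.2.castSucc then coef x p else 0)
            + (if j = p.2.succ then coef x p else 0)) else 0 := by
      intro p
      have hcs : p.2.castSucc ≠ p.2.succ := by
        intro h; have := congrArg Fin.val h; simp [Fin.val_succ] at this
      simp only [pChain, pBoundary, Finset.mem_insert, Finset.mem_singleton]
      by_cases h1 : i = p.1 <;> by_cases h2 : j = p.2.castSucc <;> by_cases h3 : j = p.2.succ <;>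
        first
          | (exfalso; exact hcs (h2.symm.trans h3))
          | simp [h1, h2, h3, eq_comm, hcs]
    rw [Finset.sum_congr rfl (fun p _ => key p)]
    rw [Fintype.sum_prod_type]
    have hpull : ∀ i' : Fin L, (∑ q : Fin L, if i = i' then ((if j = q.castSucc then coef x (i', q) else 0)
          + (if j = q.succ then coef x (i', q) else 0)) else 0)
        = if i = i' then (∑ q : Fin L, ((if j = q.castSucc then coef x (i', q) else 0)
          + (if j = q.succ then coef x (i', q) else 0))) else 0 := by
      intro i'; split <;> simp
    simp only [hpull, Finset.sum_ite_eq, Finset.mem_univ, if_true]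
    rw [Finset.sum_add_distrib, sum_castSucc_eq j (fun q => coef x (i, q)),
      sum_succ_eq j (fun q => coef x (i, q))]
    by_cases h0 : (j : ℕ) = 0
    · rw [dif_pos (by omega), dif_neg (by omega), add_zero, coef_val]
      rw [show ((⟨(j : ℕ), by omega⟩ : Fin L) : ℕ) = 0 from h0, Finset.sum_range_one]
      rw [show j = (⟨0, by omega⟩ : Fin (L+1)) from Fin.ext h0]
      simp [rowF]
    · by_cases h1 : (j : ℕ) < L
      · rw [dif_pos h1, dif_pos (by omega), coef_val, coef_val]
        rw [show ((⟨(j : ℕ) - 1, by omega⟩ : Fin L) : ℕ) + 1 = (j : ℕ) from by simp; omega]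
        rw [show ((⟨(j : ℕ), h1⟩ : Fin L) : ℕ) = (j : ℕ) from rfl, Finset.sum_range_succ]
        have hr : rowF x i (j : ℕ) = x (.horiz i j) := by
          rw [rowF, dif_pos j.isLt]
        have hz : ∀ a b : ZMod 2, (a + b) + a = b := by decide
        rw [hz]; exact hr
      · have hjL : (j : ℕ) = L := by have := j.isLt; omega
        rw [dif_neg (by omega), dif_pos (by omega), zero_add, coef_val]
        rw [show ((⟨(j : ℕ) - 1, by omega⟩ : Fin L) : ℕ) + 1 = L from by simp; omega]
        have hr : ∑ j ∈ Finset.range (L+1), rowF x i j = 0 := by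
          have := row_sum hL hc i.val i.isLt
          simpa using this
        rw [Finset.sum_range_succ] at hr
        have hb : rowF x i L = x (.horiz i j) := by
          rw [rowF, dif_pos (by omega)]
          rw [show j = (⟨L, by omega⟩ : Fin (L+1)) from Fin.ext hjL]
        have hz : ∀ a b : ZMod 2, a + b = 0 → a = b := by decide
        rw [hz _ _ hr]; exact hb
  | vert i q =>
    have key : ∀ p : Fin L × Fin L, coef x p * pChain p (.vert i q)
        = if q = p.2 then ((if i = p.1.castSucc then coef x p else 0)
            + (if i = p.1.succ then coef x p else 0)) else 0 := by
      intro p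
      have hcs : p.1.castSucc ≠ p.1.succ := by
        intro h; have := congrArg Fin.val h; simp [Fin.val_succ] at this
      simp only [pChain, pBoundary, Finset.mem_insert, Finset.mem_singleton]
      by_cases h1 : q = p.2 <;> by_cases h2 : i = p.1.castSucc <;> by_cases h3 : i = p.1.succ <;>
        first
          | (exfalso; exact hcs (h2.symm.trans h3))
          | simp [h1, h2, h3, eq_comm, hcs]
    rw [Finset.sum_congr rfl (fun p _ => key p)]
    rw [Fintype.sum_prod_type]
    have hcol : ∀ i' : Fin L, (∑ q' : Fin L, if q = q' then ((if i = i'.castSucc then coef x (i', q') else 0)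
          + (if i = i'.succ then coef x (i', q') else 0)) else 0)
        = ((if i = i'.castSucc then coef x (i', q) else 0)
          + (if i = i'.succ then coef x (i', q) else 0)) := by
      intro i'
      rw [Finset.sum_ite_eq]
      simp
    simp only [hcol]
    rw [Finset.sum_add_distrib, sum_castSucc_eq i (fun i' => coef x (i', q)),
      sum_succ_eq i (fun i' => coef x (i', q))]
    have hd1 : (if h : (i : ℕ) < L then coef x (⟨(i : ℕ), h⟩, q) else 0)
        = ∑ j ∈ Finset.range ((q : ℕ) + 1), (if h : (i : ℕ) < L then rowF x ⟨(i : ℕ), h⟩ j else 0) := by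
      by_cases h : (i : ℕ) < L <;> simp [h, coef_val]
    have hd2 : (if h : 0 < (i : ℕ) then coef x (⟨(i : ℕ) - 1, by have := i.isLt; omega⟩, q) else 0)
        = ∑ j ∈ Finset.range ((q : ℕ) + 1),
            (if h : 0 < (i : ℕ) then rowF x ⟨(i : ℕ) - 1, by have := i.isLt; omega⟩ j else 0) := by
      by_cases h : 0 < (i : ℕ) <;> simp [h, coef_val]
    rw [hd1, hd2, ← Finset.sum_add_distrib]
    have hcc : ∀ j ∈ Finset.range ((q : ℕ) + 1),
        ((if h : (i : ℕ) < L then rowF x ⟨(i : ℕ), h⟩ j else 0)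
          + (if h : 0 < (i : ℕ) then rowF x ⟨(i : ℕ) - 1, by have := i.isLt; omega⟩ j else 0))
        = colF x i j := by
      intro j hj
      rw [Finset.mem_range] at hj
      have hjL : j < L + 1 := by have := q.isLt; omega
      rw [colF, dif_pos hjL, Hcol]
      congr 1
      · by_cases h : (i : ℕ) < L <;> simp [h, rowF, dif_pos hjL, (by omega : j ≤ L)]
      · by_cases h : 0 < (i : ℕ) <;> simp [h, rowF, dif_pos hjL, (by omega : j ≤ L)]
    rw [Finset.sum_congr rfl hcc, ← vert_eq hc i q.val q.isLt]

lemma sum_star_card {L : ℕ} (x : Edge L → ZMod 2) (s : Vertex L) :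
    ∑ e ∈ star s, x e = ((((star s).filter (fun e => x e = 1)).card : ℕ) : ZMod 2) := by
  have h1 : ∀ e ∈ star s, x e = if x e = 1 then 1 else 0 := by
    intro e _
    generalize x e = z; revert z; decide
  rw [Finset.sum_congr rfl h1, Finset.sum_boole]


/-- uniqueness of the planar code state: any f satisfying all the
stabilizer equations (a) (-1)^{n_s(x)} f(x) = f(x) for all s, x and
(b) f(x + 1_{∂p}) = f(x) for all p, x, is a scalar multiple of the indicator
function of the cycle space 𝒵. -/
theorem planar_code_state_unique (L : ℕ) (hL : 1 ≤ L)
    (f : (Edge L → ZMod 2) → ℂ)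
    (ha : ∀ (s : Vertex L) (x : Edge L → ZMod 2),
        (-1 : ℂ) ^ ((star s).filter (fun e => x e = 1)).card * f x = f x)
    (hb : ∀ (p : Fin L × Fin L) (x : Edge L → ZMod 2), f (x + pChain p) = f x) :
    ∃ c : ℂ, f = fun x => c * (if IsCycle x then 1 else 0) := by
  refine ⟨f 0, ?_⟩
  funext x
  by_cases hx : IsCycle x
  · rw [if_pos hx, mul_one]
    have tel : ∀ A : Finset (Fin L × Fin L), f (∑ p ∈ A, pChain p) = f 0 := by
      intro A
      induction A using Finset.induction with
      | empty => simp
      | @insert a A' h ih =>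
        rw [Finset.sum_insert h, add_comm, hb, ih]
    have := tel (Finset.univ.filter (fun p => coef x p = 1))
    rw [decomp hL hx] at this
    exact this
  · rw [if_neg hx, mul_zero]
    rw [IsCycle] at hx
    push_neg at hx
    obtain ⟨s, hs⟩ := hx
    rw [sum_star_card] at hs
    have hodd : Odd ((star s).filter (fun e => x e = 1)).card := by
      rcases Nat.even_or_odd ((star s).filter (fun e => x e = 1)).card with he | ho
      · exfalso
        apply hs
        obtain ⟨k, hk⟩ := he
        rw [hk]
        push_cast
        generalize ((k : ℕ) : ZMod 2) = z
        revert z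
        decide
      · exact ho
    have h1 := ha s x
    rw [hodd.neg_one_pow] at h1
    have h2 : (2 : ℂ) * f x = 0 := by linear_combination - h1
    have h3 := mul_eq_zero.mp h2
    simpa using h3
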